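/- arXiv:1108.2201 — 4 statements merged into one kernel-verified Lean document; each statement's English description precedes it below -/
import Mathlib

section
/- Let m, n be positive natural numbers, M : Fin m → Fin n → ℝ a payoff matrix, P and Q the standard simplices of ℝ^m and ℝ^n, and Γ : P × Q → P × Q the map Γ(p,q) = (p'(p,q), q'(p,q)) with p'_i(p,q) = (p_i + max(M(a_i,q) − M(p,q), 0)) / (1 + Σ_k max(M(a_k,q) − M(p,q), 0)) and q'_j(p,q) = (q_j + max(M(p,q) − M(p,b_j), 0)) / (1 + Σ_k max(M(p,q) − M(p,b_k), 0)). If (p̃, q̃) ∈ P × Q is a fixed point of Γ, then M(a_i, q̃) ≤ M(p̃, q̃) for every i ∈ Fin m. -/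
open Finset Filter Topology

/-- Expected payoff of player A at profile `(p, q)`. -/
noncomputable def expPayoff {m n : ℕ} (M : Fin m → Fin n → ℝ)
    (p : Fin m → ℝ) (q : Fin n → ℝ) : ℝ :=
  ∑ i, ∑ j, p i * M i j * q j

/-- Payoff `M(a_i, q)` of pure strategy `a_i` against mixed strategy `q`. -/
noncomputable def rowPayoff {m n : ℕ} (M : Fin m → Fin n → ℝ)
    (q : Fin n → ℝ) (i : Fin m) : ℝ :=
  ∑ j, M i j * q j

/-- Payoff `M(p, b_j)` of mixed strategy `p` against pure strategy `b_j`. -/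
noncomputable def colPayoff {m n : ℕ} (M : Fin m → Fin n → ℝ)
    (p : Fin m → ℝ) (j : Fin n) : ℝ :=
  ∑ i, p i * M i j

/-- First component `p'(p, q)` of the map `Γ`. -/
noncomputable def pNext {m n : ℕ} (M : Fin m → Fin n → ℝ)
    (p : Fin m → ℝ) (q : Fin n → ℝ) (i : Fin m) : ℝ :=
  (p i + max (rowPayoff M q i - expPayoff M p q) 0) /
    (1 + ∑ k, max (rowPayoff M q k - expPayoff M p q) 0)

/-- Second component `q'(p, q)` of the map `Γ`. -/
noncomputable def qNext {m n : ℕ} (M : Fin m → Fin n → ℝ)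
    (p : Fin m → ℝ) (q : Fin n → ℝ) (j : Fin n) : ℝ :=
  (q j + max (expPayoff M p q - colPayoff M p j) 0) /
    (1 + ∑ k, max (expPayoff M p q - colPayoff M p k) 0)

/-- The map `Γ(p,q) = (p'(p,q), q'(p,q))`. -/
noncomputable def Gamma {m n : ℕ} (M : Fin m → Fin n → ℝ)
    (x : (Fin m → ℝ) × (Fin n → ℝ)) : (Fin m → ℝ) × (Fin n → ℝ) :=
  (pNext M x.1 x.2, qNext M x.1 x.2)

theorem fixed_point_row_payoff_le {m n : ℕ} (hm : 0 < m) (hn : 0 < n)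
    (M : Fin m → Fin n → ℝ) (pt : Fin m → ℝ) (qt : Fin n → ℝ)
    (hp : pt ∈ stdSimplex ℝ (Fin m)) (hq : qt ∈ stdSimplex ℝ (Fin n))
    (hfix : Gamma M (pt, qt) = (pt, qt)) :
    ∀ i : Fin m, rowPayoff M qt i ≤ expPayoff M pt qt := by
  classical
  set E := expPayoff M pt qt with hE
  set φ : Fin m → ℝ := fun i => max (rowPayoff M qt i - E) 0 with hφ
  set S : ℝ := ∑ k, φ k with hS
  have hφ0 : ∀ i, 0 ≤ φ i := fun i => le_max_right _ _
  have hS0 : 0 ≤ S := Finset.sum_nonneg fun i _ => hφ0 i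
  have hpos : (0:ℝ) < 1 + S := by linarith
  have hmul : ∀ i, φ i = pt i * S := by
    intro i
    have h := congrFun (congrArg Prod.fst hfix) i
    simp only [Gamma, pNext, ← hE, ← hφ, ← hS] at h
    field_simp at h
    nlinarith [h]
  have hsum : ∑ i, pt i * (rowPayoff M qt i - E) = 0 := by
    have h1 : ∑ i, pt i * rowPayoff M qt i = E := by
      simp only [hE, expPayoff, rowPayoff, Finset.mul_sum]
      exact Finset.sum_congr rfl fun i _ => Finset.sum_congr rfl fun j _ => by ring
    have h2 : ∑ i, pt i * E = E := by rw [← Finset.sum_mul, hp.2, one_mul]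
    simp only [mul_sub, Finset.sum_sub_distrib, h1, h2, sub_self]
  have hSzero : S = 0 := by
    by_contra hne
    have hSpos : 0 < S := lt_of_le_of_ne hS0 (Ne.symm hne)
    have hex : ∃ i, 0 < pt i ∧ rowPayoff M qt i - E ≤ 0 := by
      by_contra hc
      push_neg at hc
      have hnn : ∀ i ∈ Finset.univ, 0 ≤ pt i * (rowPayoff M qt i - E) := by
        intro i _
        rcases (hp.1 i).lt_or_eq with h | h
        · exact le_of_lt (mul_pos h (hc i h))
        · simp [← h]
      have hex0 : ∃ i, 0 < pt i := by
        by_contra hc2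
        push_neg at hc2
        have : (∑ i, pt i) = 0 :=
          Finset.sum_eq_zero fun i _ => le_antisymm (hc2 i) (hp.1 i)
        rw [hp.2] at this; norm_num at this
      obtain ⟨i0, hi0⟩ := hex0
      have h1 : pt i0 * (rowPayoff M qt i0 - E) ≤ ∑ i, pt i * (rowPayoff M qt i - E) :=
        Finset.single_le_sum hnn (Finset.mem_univ i0)
      have h2 : 0 < pt i0 * (rowPayoff M qt i0 - E) := mul_pos hi0 (hc i0 hi0)
      rw [hsum] at h1
      linarith
    obtain ⟨i, hi1, hi2⟩ := hex
    have : φ i = 0 := by simp [hφ, hi2]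
    rw [hmul i] at this
    nlinarith
  intro i
  have h0 : φ i = 0 := by rw [hmul i, hSzero, mul_zero]
  have h1 : rowPayoff M qt i - E ≤ φ i := le_max_left _ _
  rw [h0] at h1
  linarith
end

section
/- Let m, n be positive natural numbers, M : Fin m → Fin n → ℝ a payoff matrix, P and Q the standard simplices of ℝ^m and ℝ^n, and Γ : P × Q → P × Q the map Γ(p,q) = (p'(p,q), q'(p,q)) with p'_i(p,q) = (p_i + max(M(a_i,q) − M(p,q), 0)) / (1 + Σ_k max(M(a_k,q) − M(p,q), 0)) and q'_j(p,q) = (q_j + max(M(p,q) − M(p,b_j), 0)) / (1 + Σ_k max(M(p,q) − M(p,b_k), 0)). If (p̃, q̃) ∈ P × Q is a fixed point of Γ, then M(p̃, b_j) ≥ M(p̃, q̃) for every j ∈ Fin n. -/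
open Finset Filter Topology

theorem fixed_point_col_payoff_ge {m n : ℕ} (hm : 0 < m) (hn : 0 < n)
    (M : Fin m → Fin n → ℝ) (pt : Fin m → ℝ) (qt : Fin n → ℝ)
    (hp : pt ∈ stdSimplex ℝ (Fin m)) (hq : qt ∈ stdSimplex ℝ (Fin n))
    (hfix : Gamma M (pt, qt) = (pt, qt)) :
    ∀ j : Fin n, expPayoff M pt qt ≤ colPayoff M pt j := by
  set E := expPayoff M pt qt with hE
  set f : Fin n → ℝ := fun j => max (E - colPayoff M pt j) 0 with hf
  set S := ∑ k, f k with hS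
  have hfnn : ∀ j, 0 ≤ f j := fun j => le_max_right _ _
  have hSnonneg : 0 ≤ S := Finset.sum_nonneg fun k _ => hfnn k
  have hpos : (0:ℝ) < 1 + S := by linarith
  have hfixq : ∀ j, qNext M pt qt j = qt j := by
    intro j
    have h2 := congrArg Prod.snd hfix
    simp only [Gamma] at h2
    exact congrFun h2 j
  have key : ∀ j, f j = qt j * S := by
    intro j
    have h := hfixq j
    unfold qNext at h
    rw [div_eq_iff (ne_of_gt hpos)] at h
    have h' : qt j + f j = qt j * (1 + S) := h
    nlinarith [h']
  have hSzero : S = 0 := by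
    by_contra hne
    have hSpos : 0 < S := lt_of_le_of_ne hSnonneg (Ne.symm hne)
    -- sum of terms is zero
    have hsum : ∑ j, qt j * colPayoff M pt j = E := by
      rw [hE]
      unfold expPayoff colPayoff
      rw [Finset.sum_comm]
      refine Finset.sum_congr rfl fun j _ => ?_
      rw [Finset.mul_sum]
      exact Finset.sum_congr rfl fun i _ => by ring
    have hq1 : ∑ j, qt j = 1 := hq.2
    have hzero : ∑ j, qt j * (E - colPayoff M pt j) = 0 := by
      have h3 : ∑ j, qt j * (E - colPayoff M pt j)
          = (∑ j, qt j) * E - ∑ j, qt j * colPayoff M pt j := by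
        rw [Finset.sum_mul, ← Finset.sum_sub_distrib]
        exact Finset.sum_congr rfl fun j _ => by ring
      rw [h3, hq1, hsum]; ring
    have hterm : ∀ j ∈ Finset.univ, 0 ≤ qt j * (E - colPayoff M pt j) := by
      intro j _
      rcases le_or_gt (E - colPayoff M pt j) 0 with h | h
      · have hfj : f j = 0 := max_eq_right h
        have hqj : qt j = 0 := by
          have hk := key j
          rw [hfj] at hk
          rcases mul_eq_zero.mp hk.symm with h1 | h1
          · exact h1
          · exact absurd h1 hne
        simp [hqj]
      · exact mul_nonneg (hq.1 j) h.le
    have hall : ∀ j ∈ Finset.univ, qt j * (E - colPayoff M pt j) = 0 :=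
      (Finset.sum_eq_zero_iff_of_nonneg hterm).mp hzero
    -- there is j with f j > 0
    obtain ⟨j, -, hj⟩ : ∃ j ∈ Finset.univ, f j ≠ 0 := by
      by_contra hc
      push_neg at hc
      have : S = 0 := Finset.sum_eq_zero hc
      exact hne this
    have hfj : 0 < f j := lt_of_le_of_ne (hfnn j) (Ne.symm hj)
    have hEj : 0 < E - colPayoff M pt j := by
      by_contra hc
      push_neg at hc
      rw [hf] at hfj
      simp only [max_eq_right hc] at hfj
      exact lt_irrefl 0 hfj
    have hqj : 0 < qt j := by
      have hk := key j
      nlinarith [hfj, hSpos]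
    have := hall j (Finset.mem_univ j)
    nlinarith
  -- S = 0: all f j = 0
  intro j
  have : f j = 0 := by
    have := (Finset.sum_eq_zero_iff_of_nonneg (fun k _ => hfnn k)).mp hSzero j (Finset.mem_univ j)
    exact this
  have h4 : E - colPayoff M pt j ≤ 0 := by
    by_contra hc
    push_neg at hc
    rw [hf] at this
    simp only [max_eq_left hc.le] at this
    linarith
  linarith
end

section
/- Let m, n be positive natural numbers, M : Fin m → Fin n → ℝ a payoff matrix, P and Q the standard simplices of ℝ^m and ℝ^n, and Γ : P × Q → P × Q the map Γ(p,q) = (p'(p,q), q'(p,q)) with p'_i(p,q) = (p_i + max(M(a_i,q) − M(p,q), 0)) / (1 + Σ_k max(M(a_k,q) − M(p,q), 0)) and q'_j(p,q) = (q_j + max(M(p,q) − M(p,b_j), 0)) / (1 + Σ_k max(M(p,q) − M(p,b_k), 0)). If (p̃, q̃) ∈ P × Q is a fixed point of Γ, then (p̃, q̃) is a saddle point: for all p ∈ P and all q ∈ Q, M(p, q̃) ≤ M(p̃, q̃) ≤ M(p̃, q). Consequently sup_{p∈P} M(p, q̃) = M(p̃, q̃) and inf_{q∈Q} M(p̃,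 q) = M(p̃, q̃). -/
open Finset Filter Topology

lemma exp_eq_sum_row {m n : ℕ} (M : Fin m → Fin n → ℝ) (p : Fin m → ℝ) (q : Fin n → ℝ) :
    expPayoff M p q = ∑ i, p i * rowPayoff M q i := by
  unfold expPayoff rowPayoff
  simp [Finset.mul_sum, mul_assoc]

lemma exp_eq_sum_col {m n : ℕ} (M : Fin m → Fin n → ℝ) (p : Fin m → ℝ) (q : Fin n → ℝ) :
    expPayoff M p q = ∑ j, q j * colPayoff M p j := by
  unfold expPayoff colPayoff
  rw [Finset.sum_comm]
  refine Finset.sum_congr rfl fun j _ => ?_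
  rw [Finset.mul_sum]
  exact Finset.sum_congr rfl fun i _ => by ring

lemma key {m : ℕ} (p : Fin m → ℝ) (f : Fin m → ℝ)
    (hp : p ∈ stdSimplex ℝ (Fin m))
    (hfix : ∀ i, (p i + max (f i) 0) / (1 + ∑ k, max (f k) 0) = p i)
    (hmean : ∑ i, p i * f i = 0) :
    ∀ i, f i ≤ 0 := by
  have hS : (0:ℝ) ≤ ∑ k, max (f k) 0 :=
    Finset.sum_nonneg fun k _ => le_max_right _ _
  have h0 : ∃ i0, 0 < p i0 ∧ f i0 ≤ 0 := by
    by_contra h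
    push_neg at h
    have hpos : 0 < ∑ i, p i * f i := by
      rcases Finset.exists_ne_zero_of_sum_ne_zero (by rw [hp.2]; norm_num :
        (∑ i, p i) ≠ 0) with ⟨i, _, hpi⟩
      have hpi' : 0 < p i := lt_of_le_of_ne (hp.1 i) (Ne.symm hpi)
      refine Finset.sum_pos' (fun j _ => ?_) ⟨i, Finset.mem_univ i, ?_⟩
      · rcases eq_or_lt_of_le (hp.1 j) with hj | hj
        · simp [← hj]
        · exact le_of_lt (mul_pos hj (h j hj))
      · exact mul_pos hpi' (h i hpi')
    rw [hmean] at hpos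
    exact lt_irrefl _ hpos
  obtain ⟨i0, hpi0, hfi0⟩ := h0
  have hmax0 : max (f i0) 0 = 0 := max_eq_right hfi0
  have hden : (0:ℝ) < 1 + ∑ k, max (f k) 0 := by linarith
  have heq := hfix i0
  rw [hmax0, add_zero, div_eq_iff (ne_of_gt hden)] at heq
  have hSzero : ∑ k, max (f k) 0 = 0 := by
    nlinarith
  have hall : ∀ k ∈ Finset.univ, max (f k) 0 = 0 :=
    (Finset.sum_eq_zero_iff_of_nonneg (fun k _ => le_max_right _ _)).mp hSzero
  intro i
  have := hall i (Finset.mem_univ i)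
  calc f i ≤ max (f i) 0 := le_max_left _ _
    _ = 0 := this

theorem fixed_point_is_saddle_point {m n : ℕ} (hm : 0 < m) (hn : 0 < n)
    (M : Fin m → Fin n → ℝ) (pt : Fin m → ℝ) (qt : Fin n → ℝ)
    (hp : pt ∈ stdSimplex ℝ (Fin m)) (hq : qt ∈ stdSimplex ℝ (Fin n))
    (hfix : Gamma M (pt, qt) = (pt, qt)) :
    (∀ p ∈ stdSimplex ℝ (Fin m), ∀ q ∈ stdSimplex ℝ (Fin n),
      expPayoff M p qt ≤ expPayoff M pt qt ∧ expPayoff M pt qt ≤ expPayoff M pt q) ∧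
    sSup ((fun p => expPayoff M p qt) '' stdSimplex ℝ (Fin m)) = expPayoff M pt qt ∧
    sInf ((fun q => expPayoff M pt q) '' stdSimplex ℝ (Fin n)) = expPayoff M pt qt := by
  set v := expPayoff M pt qt with hv
  have hfix1 : ∀ i, pNext M pt qt i = pt i := fun i =>
    congrFun (congrArg Prod.fst hfix) i
  have hfix2 : ∀ j, qNext M pt qt j = qt j := fun j =>
    congrFun (congrArg Prod.snd hfix) j
  -- rows
  have hrow : ∀ i, rowPayoff M qt i ≤ v := by
    have := key pt (fun i => rowPayoff M qt i - v) hp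
      (fun i => hfix1 i)
      (by
        have : ∑ i, pt i * (rowPayoff M qt i - v) = (∑ i, pt i * rowPayoff M qt i) - (∑ i, pt i) * v := by
          rw [Finset.sum_mul]
          rw [← Finset.sum_sub_distrib]
          exact Finset.sum_congr rfl fun i _ => by ring
        rw [this, hp.2, ← exp_eq_sum_row]
        ring)
    intro i
    have h := this i
    linarith
  have hcol : ∀ j, v ≤ colPayoff M pt j := by
    have := key qt (fun j => v - colPayoff M pt j) hq
      (fun j => hfix2 j)
      (by
        have : ∑ j, qt j * (v - colPayoff M pt j) = (∑ j, qt j) * v - ∑ j, qt j * colPayoff M pt j := by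
          rw [Finset.sum_mul, ← Finset.sum_sub_distrib]
          exact Finset.sum_congr rfl fun j _ => by ring
        rw [this, hq.2, ← exp_eq_sum_col]
        ring)
    intro j
    have h := this j
    linarith
  have hmain : ∀ p ∈ stdSimplex ℝ (Fin m), ∀ q ∈ stdSimplex ℝ (Fin n),
      expPayoff M p qt ≤ v ∧ v ≤ expPayoff M pt q := by
    intro p hpp q hqq
    constructor
    · rw [exp_eq_sum_row]
      calc ∑ i, p i * rowPayoff M qt i ≤ ∑ i, p i * v :=
            Finset.sum_le_sum fun i _ => mul_le_mul_of_nonneg_left (hrow i) (hpp.1 i)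
        _ = v := by rw [← Finset.sum_mul, hpp.2, one_mul]
    · rw [exp_eq_sum_col]
      calc v = ∑ j, q j * v := by rw [← Finset.sum_mul, hqq.2, one_mul]
        _ ≤ ∑ j, q j * colPayoff M pt j :=
            Finset.sum_le_sum fun j _ => mul_le_mul_of_nonneg_left (hcol j) (hqq.1 j)
  refine ⟨hmain, ?_, ?_⟩
  · apply IsGreatest.csSup_eq
    constructor
    · exact ⟨pt, hp, rfl⟩
    · rintro x ⟨p, hpp, rfl⟩
      exact (hmain p hpp qt hq).1
  · apply IsLeast.csInf_eq
    constructor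
    · exact ⟨qt, hq, rfl⟩
    · rintro x ⟨q, hqq, rfl⟩
      exact (hmain pt hp q hqq).2
end

section
/- Let m, n be positive natural numbers, M : Fin m → Fin n → ℝ a payoff matrix, P and Q the standard simplices of ℝ^m and ℝ^n, and Γ : P × Q → P × Q the map Γ(p,q) = (p'(p,q), q'(p,q)) with p'_i(p,q) = (p_i + max(M(a_i,q) − M(p,q), 0)) / (1 + Σ_k max(M(a_k,q) − M(p,q), 0)) and q'_j(p,q) = (q_j + max(M(p,q) − M(p,b_j), 0)) / (1 + Σ_k max(M(p,q) − M(p,b_k), 0)). Suppose M satisfies: for all sequences ((p_n, q_n)) and ((p'_n, q'_n)) in P × Q such that max(M(a_i, q_n) − M(p_n, q_n), 0) → 0 and max(M(p_n, q_n) − M(p_n, b_j), 0) → 0 for all i, j, and likewise for ((p'_n, q'_n)), one has |(p_n, q_n) − (p'_n, q'_n)| → 0. Then Γ has sequentially at most one fixed point: for all sequences ((p_n, q_n)), ((p'_n, q'_n)) in P × Q with |Γ(p_n, q_n) − (p_n, q_n)| → 0 and |Γ(p'_n, q'_n) − (p'_n, q'_n)| → 0, one has |(p_n, q_n) − (p'_n,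 q'_n)| → 0. -/
open Finset Filter Topology

/-! Each component of `Γ` is Nash's update `p ↦ (p + φ) / (1 + ∑ φ)` for the gains
`φ i = max (r i - p ⬝ r) 0` of one player against the other's strategy. Since
`∑ p i (r i - p ⬝ r) = 0` and `φ i (r i - p ⬝ r) = φ i ^ 2`, one gets
`∑ φ i ^ 2 = (1 + ∑ φ) ∑ (p' i - p i) (r i - p ⬝ r)`. Payoffs are bounded on the simplex, so a
vanishing displacement `Γ x - x` forces all gains to vanish: approximate fixed points of `Γ` are
approximate equilibria, to which the hypothesis on `M` applies. -/

section NashUpdate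

variable {ι : Type*} [Fintype ι]

noncomputable def gain (p r : ι → ℝ) (i : ι) : ℝ :=
  max (r i - ∑ k, p k * r k) 0

/-- Nash's update of a mixed strategy `p`, where `r i` is the payoff of the `i`-th pure strategy. -/
noncomputable def nashUpdate (p r : ι → ℝ) (i : ι) : ℝ :=
  (p i + gain p r i) / (1 + ∑ k, gain p r k)

lemma gain_nonneg (p r : ι → ℝ) (i : ι) : 0 ≤ gain p r i :=
  le_max_right _ _

lemma gain_mul_eq_sq (p r : ι → ℝ) (i : ι) :
    gain p r i * (r i - ∑ k, p k * r k) = gain p r i ^ 2 := by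
  rcases le_total (r i - ∑ k, p k * r k) 0 with h | h
  · simp [gain, max_eq_right h]
  · rw [gain, max_eq_left h, sq]

lemma abs_sum_mul_le_of_mem_stdSimplex {p : ι → ℝ} (hp : p ∈ stdSimplex ℝ ι) {a : ι → ℝ}
    {B : ℝ} (ha : ∀ i, |a i| ≤ B) : |∑ i, p i * a i| ≤ B :=
  calc |∑ i, p i * a i| ≤ ∑ i, p i * B := by
        refine (abs_sum_le_sum_abs _ _).trans (sum_le_sum fun i _ => ?_)
        rw [abs_mul, abs_of_nonneg (hp.1 i)]
        exact mul_le_mul_of_nonneg_left (ha i) (hp.1 i)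
    _ = B := by rw [← sum_mul, hp.2, one_mul]

lemma sum_gain_sq_eq {p : ι → ℝ} (hp : ∑ i, p i = 1) (r : ι → ℝ) :
    ∑ i, gain p r i ^ 2 = (1 + ∑ k, gain p r k) *
      ∑ i, (nashUpdate p r i - p i) * (r i - ∑ k, p k * r k) := by
  set e := ∑ k, p k * r k
  set S := ∑ k, gain p r k
  have hS : 1 + S ≠ 0 := (add_pos_of_pos_of_nonneg one_pos
    (sum_nonneg fun k _ => gain_nonneg p r k)).ne'
  have hdisp : ∀ i, (1 + S) * (nashUpdate p r i - p i) = gain p r i - p i * S := fun i => by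
    change (1 + S) * ((p i + gain p r i) / (1 + S) - p i) = _
    field_simp; ring
  have hcentred : ∑ i, p i * (r i - e) = 0 := by
    simp only [mul_sub, sum_sub_distrib, ← sum_mul, hp, one_mul]
    exact sub_self e
  calc ∑ i, gain p r i ^ 2
      = ∑ i, (gain p r i - p i * S) * (r i - e) + S * ∑ i, p i * (r i - e) := by
        rw [mul_sum, ← sum_add_distrib]
        exact sum_congr rfl fun i _ => by rw [← gain_mul_eq_sq]; ring
    _ = (1 + S) * ∑ i, (nashUpdate p r i - p i) * (r i - e) := by
        rw [hcentred, mul_zero, add_zero, mul_sum]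
        exact sum_congr rfl fun i _ => by rw [← mul_assoc, hdisp]

lemma gain_sq_le_dist {p : ι → ℝ} (hp : p ∈ stdSimplex ℝ ι) {r : ι → ℝ} {B : ℝ}
    (hr : ∀ i, |r i| ≤ B) (i : ι) :
    gain p r i ^ 2 ≤
      (1 + Fintype.card ι * (2 * B)) * (Fintype.card ι * (dist (nashUpdate p r) p * (2 * B))) := by
  set e := ∑ k, p k * r k
  have hB : 0 ≤ B := (abs_nonneg _).trans (hr i)
  have hspread : ∀ k, |r k - e| ≤ 2 * B := fun k =>
    (abs_sub _ _).trans (by linarith [hr k, abs_sum_mul_le_of_mem_stdSimplex hp hr])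
  have hgain : ∀ k, gain p r k ≤ 2 * B := fun k =>
    max_le ((le_abs_self _).trans (hspread k)) (by linarith)
  have hdisp : ∀ k, (nashUpdate p r k - p k) * (r k - e) ≤ dist (nashUpdate p r) p * (2 * B) :=
    fun k => calc
      _ ≤ |nashUpdate p r k - p k| * |r k - e| := by rw [← abs_mul]; exact le_abs_self _
      _ ≤ dist (nashUpdate p r) p * (2 * B) := by
        rw [← Real.dist_eq]
        exact mul_le_mul (dist_le_pi_dist _ _ k) (hspread k) (abs_nonneg _) dist_nonneg
  calc gain p r i ^ 2 ≤ ∑ k, gain p r k ^ 2 :=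
        single_le_sum (fun k _ => sq_nonneg (gain p r k)) (mem_univ i)
    _ = (1 + ∑ k, gain p r k) * ∑ k, (nashUpdate p r k - p k) * (r k - e) :=
        sum_gain_sq_eq hp.2 r
    _ ≤ (1 + ∑ k, gain p r k) * (Fintype.card ι * (dist (nashUpdate p r) p * (2 * B))) := by
        gcongr
        · exact add_nonneg zero_le_one (sum_nonneg fun k _ => gain_nonneg p r k)
        · exact (sum_le_sum fun k _ => hdisp k).trans_eq (by simp)
    _ ≤ _ := by
        gcongr
        exact (sum_le_sum fun k _ => hgain k).trans_eq (by simp)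

lemma tendsto_gain_of_tendsto_dist_nashUpdate {p r : ℕ → ι → ℝ}
    (hp : ∀ k, p k ∈ stdSimplex ℝ ι) {B : ℝ} (hr : ∀ k i, |r k i| ≤ B)
    (h : Tendsto (fun k => dist (nashUpdate (p k) (r k)) (p k)) atTop (𝓝 0)) (i : ι) :
    Tendsto (fun k => gain (p k) (r k) i) atTop (𝓝 0) := by
  set c : ℝ := (Fintype.card ι : ℝ)
  have hbound : Tendsto (fun k => √((1 + c * (2 * B)) * (c * (dist (nashUpdate (p k) (r k)) (p k)
      * (2 * B))))) atTop (𝓝 0) := by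
    simpa using ((h.mul_const (2 * B)).const_mul c |>.const_mul (1 + c * (2 * B))).sqrt
  refine squeeze_zero (fun k => gain_nonneg _ _ i) (fun k => ?_) hbound
  exact Real.le_sqrt_of_sq_le (gain_sq_le_dist (hp k) (hr k) i)

end NashUpdate

section BimatrixGame

variable {m n : ℕ} (M : Fin m → Fin n → ℝ)

lemma expPayoff_eq_sum_rowPayoff (p : Fin m → ℝ) (q : Fin n → ℝ) :
    expPayoff M p q = ∑ i, p i * rowPayoff M q i := by
  simp only [expPayoff, rowPayoff, mul_sum, mul_assoc]

lemma expPayoff_eq_sum_colPayoff (p : Fin m → ℝ) (q : Fin n → ℝ) :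
    expPayoff M p q = ∑ j, q j * colPayoff M p j := by
  simp only [expPayoff, colPayoff, mul_sum]
  rw [sum_comm]
  exact sum_congr rfl fun j _ => sum_congr rfl fun i _ => by ring

lemma gain_rowPayoff (p : Fin m → ℝ) (q : Fin n → ℝ) (i : Fin m) :
    gain p (rowPayoff M q) i = max (rowPayoff M q i - expPayoff M p q) 0 := by
  rw [gain, expPayoff_eq_sum_rowPayoff]

/-- The column player maximises the payoff `-M`. -/
lemma gain_neg_colPayoff (p : Fin m → ℝ) (q : Fin n → ℝ) (j : Fin n) :
    gain q (fun j => -colPayoff M p j) j = max (expPayoff M p q - colPayoff M p j) 0 := by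
  simp only [gain, mul_neg, sum_neg_distrib, ← expPayoff_eq_sum_colPayoff, neg_sub_neg]

lemma pNext_eq_nashUpdate (p : Fin m → ℝ) (q : Fin n → ℝ) :
    pNext M p q = nashUpdate p (rowPayoff M q) := by
  funext i
  simp only [pNext, nashUpdate, gain_rowPayoff]

lemma qNext_eq_nashUpdate (p : Fin m → ℝ) (q : Fin n → ℝ) :
    qNext M p q = nashUpdate q (fun j => -colPayoff M p j) := by
  funext j
  simp only [qNext, nashUpdate, gain_neg_colPayoff]

lemma abs_rowPayoff_le {q : Fin n → ℝ} (hq : q ∈ stdSimplex ℝ (Fin n)) (i : Fin m) :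
    |rowPayoff M q i| ≤ ‖M‖ := by
  simp only [rowPayoff, mul_comm (M i _)]
  exact abs_sum_mul_le_of_mem_stdSimplex hq fun j =>
    (norm_le_pi_norm (M i) j).trans (norm_le_pi_norm M i)

lemma abs_neg_colPayoff_le {p : Fin m → ℝ} (hp : p ∈ stdSimplex ℝ (Fin m)) (j : Fin n) :
    |-colPayoff M p j| ≤ ‖M‖ := by
  rw [abs_neg]
  exact abs_sum_mul_le_of_mem_stdSimplex hp fun i =>
    (norm_le_pi_norm (M i) j).trans (norm_le_pi_norm M i)

variable {M}

lemma tendsto_rowGain_of_tendsto_dist_Gamma {x : ℕ → (Fin m → ℝ) × (Fin n → ℝ)}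
    (hx : ∀ k, (x k).1 ∈ stdSimplex ℝ (Fin m) ∧ (x k).2 ∈ stdSimplex ℝ (Fin n))
    (h : Tendsto (fun k => dist (Gamma M (x k)) (x k)) atTop (𝓝 0)) (i : Fin m) :
    Tendsto (fun k => max (rowPayoff M (x k).2 i - expPayoff M (x k).1 (x k).2) 0)
      atTop (𝓝 0) := by
  have hp : Tendsto (fun k => dist (nashUpdate (x k).1 (rowPayoff M (x k).2)) (x k).1)
      atTop (𝓝 0) :=
    squeeze_zero (fun _ => dist_nonneg) (fun k => by
      rw [← pNext_eq_nashUpdate, Prod.dist_eq]; exact le_max_left _ _) h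
  simpa only [gain_rowPayoff] using tendsto_gain_of_tendsto_dist_nashUpdate
    (fun k => (hx k).1) (fun k => abs_rowPayoff_le M (hx k).2) hp i

lemma tendsto_colGain_of_tendsto_dist_Gamma {x : ℕ → (Fin m → ℝ) × (Fin n → ℝ)}
    (hx : ∀ k, (x k).1 ∈ stdSimplex ℝ (Fin m) ∧ (x k).2 ∈ stdSimplex ℝ (Fin n))
    (h : Tendsto (fun k => dist (Gamma M (x k)) (x k)) atTop (𝓝 0)) (j : Fin n) :
    Tendsto (fun k => max (expPayoff M (x k).1 (x k).2 - colPayoff M (x k).1 j) 0)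
      atTop (𝓝 0) := by
  have hq : Tendsto (fun k => dist (nashUpdate (x k).2 fun j => -colPayoff M (x k).1 j) (x k).2)
      atTop (𝓝 0) :=
    squeeze_zero (fun _ => dist_nonneg) (fun k => by
      rw [← qNext_eq_nashUpdate, Prod.dist_eq]; exact le_max_right _ _) h
  simpa only [gain_neg_colPayoff] using tendsto_gain_of_tendsto_dist_nashUpdate
    (fun k => (hx k).2) (fun k => abs_neg_colPayoff_le M (hx k).1) hq j

end BimatrixGame

theorem gamma_seq_at_most_one_fixed_point_general {m n : ℕ} (M : Fin m → Fin n → ℝ)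
    (hM : ∀ x y : ℕ → (Fin m → ℝ) × (Fin n → ℝ),
      (∀ k, (x k).1 ∈ stdSimplex ℝ (Fin m) ∧ (x k).2 ∈ stdSimplex ℝ (Fin n)) →
      (∀ k, (y k).1 ∈ stdSimplex ℝ (Fin m) ∧ (y k).2 ∈ stdSimplex ℝ (Fin n)) →
      (∀ i : Fin m, Tendsto
        (fun k => max (rowPayoff M (x k).2 i - expPayoff M (x k).1 (x k).2) 0) atTop (𝓝 0)) →
      (∀ j : Fin n, Tendsto
        (fun k => max (expPayoff M (x k).1 (x k).2 - colPayoff M (x k).1 j) 0) atTop (𝓝 0)) →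
      (∀ i : Fin m, Tendsto
        (fun k => max (rowPayoff M (y k).2 i - expPayoff M (y k).1 (y k).2) 0) atTop (𝓝 0)) →
      (∀ j : Fin n, Tendsto
        (fun k => max (expPayoff M (y k).1 (y k).2 - colPayoff M (y k).1 j) 0) atTop (𝓝 0)) →
      Tendsto (fun k => dist (x k) (y k)) atTop (𝓝 0)) :
    ∀ x y : ℕ → (Fin m → ℝ) × (Fin n → ℝ),
      (∀ k, (x k).1 ∈ stdSimplex ℝ (Fin m) ∧ (x k).2 ∈ stdSimplex ℝ (Fin n)) →
      (∀ k, (y k).1 ∈ stdSimplex ℝ (Fin m) ∧ (y k).2 ∈ stdSimplex ℝ (Fin n)) →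
      Tendsto (fun k => dist (Gamma M (x k)) (x k)) atTop (𝓝 0) →
      Tendsto (fun k => dist (Gamma M (y k)) (y k)) atTop (𝓝 0) →
      Tendsto (fun k => dist (x k) (y k)) atTop (𝓝 0) := by
  intro x y hx hy hgx hgy
  exact hM x y hx hy (tendsto_rowGain_of_tendsto_dist_Gamma hx hgx)
    (tendsto_colGain_of_tendsto_dist_Gamma hx hgx) (tendsto_rowGain_of_tendsto_dist_Gamma hy hgy)
    (tendsto_colGain_of_tendsto_dist_Gamma hy hgy)

theorem gamma_seq_at_most_one_fixed_point {m n : ℕ} (hm : 0 < m) (hn : 0 < n)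
    (M : Fin m → Fin n → ℝ)
    (hM : ∀ x y : ℕ → (Fin m → ℝ) × (Fin n → ℝ),
      (∀ k, (x k).1 ∈ stdSimplex ℝ (Fin m) ∧ (x k).2 ∈ stdSimplex ℝ (Fin n)) →
      (∀ k, (y k).1 ∈ stdSimplex ℝ (Fin m) ∧ (y k).2 ∈ stdSimplex ℝ (Fin n)) →
      (∀ i : Fin m, Tendsto
        (fun k => max (rowPayoff M (x k).2 i - expPayoff M (x k).1 (x k).2) 0) atTop (𝓝 0)) →
      (∀ j : Fin n, Tendsto
        (fun k => max (expPayoff M (x k).1 (x k).2 - colPayoff M (x k).1 j) 0) atTop (𝓝 0)) →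
      (∀ i : Fin m, Tendsto
        (fun k => max (rowPayoff M (y k).2 i - expPayoff M (y k).1 (y k).2) 0) atTop (𝓝 0)) →
      (∀ j : Fin n, Tendsto
        (fun k => max (expPayoff M (y k).1 (y k).2 - colPayoff M (y k).1 j) 0) atTop (𝓝 0)) →
      Tendsto (fun k => dist (x k) (y k)) atTop (𝓝 0)) :
    ∀ x y : ℕ → (Fin m → ℝ) × (Fin n → ℝ),
      (∀ k, (x k).1 ∈ stdSimplex ℝ (Fin m) ∧ (x k).2 ∈ stdSimplex ℝ (Fin n)) →
      (∀ k, (y k).1 ∈ stdSimplex ℝ (Fin m) ∧ (y k).2 ∈ stdSimplex ℝ (Fin n)) →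
      Tendsto (fun k => dist (Gamma M (x k)) (x k)) atTop (𝓝 0) →
      Tendsto (fun k => dist (Gamma M (y k)) (y k)) atTop (𝓝 0) →
      Tendsto (fun k => dist (x k) (y k)) atTop (𝓝 0) :=
  gamma_seq_at_most_one_fixed_point_general M hM
end
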